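/- arXiv:1008.2583 — 2 statements merged into one kernel-verified Lean document; each statement's English description precedes it below -/
import Mathlib

section
/- For all integers n, k with n > 2k ≥ 2, every independent set S of P(n,k) and every index t satisfy |I_t ∩ S| ≤ 2k; that is, no independent set contains more than 2k vertices of any 2k-segment. -/
namespace GP

/-- Adjacency generating relation for the generalized Petersen graph `P(n,k)`:
`Sum.inl i` is the outer vertex `u_i`, `Sum.inr i` is the inner vertex `v_i`. -/
def adjFun (n k : ℕ) : (ZMod n ⊕ ZMod n) → (ZMod n ⊕ ZMod n) → Prop
  | Sum.inl i, Sum.inl j => j = i + 1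
  | Sum.inl i, Sum.inr j => j = i
  | Sum.inr i, Sum.inr j => j = i + (k : ZMod n)
  | _, _ => False

/-- The generalized Petersen graph `P(n,k)`. -/
def P (n k : ℕ) : SimpleGraph (ZMod n ⊕ ZMod n) :=
  SimpleGraph.fromRel (adjFun n k)

/-- `s` is an independent set of vertices in `G`. -/
def IsIndep {V : Type*} (G : SimpleGraph V) (s : Finset V) : Prop :=
  ∀ v ∈ s, ∀ w ∈ s, ¬ G.Adj v w

/-- The independence number of a graph. -/
noncomputable def indepNum {V : Type*} (G : SimpleGraph V) : ℕ :=
  sSup {m | ∃ s : Finset V, IsIndep G s ∧ s.card = m}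

/-- `α(P(n,k))`. -/
noncomputable def alpha (n k : ℕ) : ℕ := indepNum (P n k)

/-- The outer vertex `u_i`. -/
def u (n : ℕ) (i : ZMod n) : ZMod n ⊕ ZMod n := Sum.inl i

/-- The inner vertex `v_i`. -/
def v (n : ℕ) (i : ZMod n) : ZMod n ⊕ ZMod n := Sum.inr i

/-- The `2k`-segment `I_t = {u_t, …, u_{t+2k-1}} ∪ {v_t, …, v_{t+2k-1}}`. -/
def segment (n k : ℕ) (t : ZMod n) : Finset (ZMod n ⊕ ZMod n) :=
  ((Finset.range (2*k)).image fun j : ℕ => u n (t + (j : ZMod n))) ∪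
  ((Finset.range (2*k)).image fun j : ℕ => v n (t + (j : ZMod n)))

/-! The segment `I_t` is covered by the `2k` spokes `u_j v_j`, and an independent set meets
each edge in at most one vertex. -/

theorem P_adj_u_v (n k : ℕ) (i : ZMod n) : (P n k).Adj (u n i) (v n i) :=
  (SimpleGraph.fromRel_adj _ _ _).2 ⟨Sum.inl_ne_inr, Or.inl rfl⟩

theorem IsIndep.card_inter_pair_le_one {V : Type*} [DecidableEq V] {G : SimpleGraph V}
    {S : Finset V} (hS : IsIndep G S) {a b : V} (hab : G.Adj a b) :
    (({a, b} : Finset V) ∩ S).card ≤ 1 := by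
  refine Finset.card_le_one.2 fun x hx y hy => ?_
  simp only [Finset.mem_inter, Finset.mem_insert, Finset.mem_singleton] at hx hy
  obtain ⟨rfl | rfl, hxS⟩ := hx <;> obtain ⟨rfl | rfl, hyS⟩ := hy
  · rfl
  · exact absurd hab (hS _ hxS _ hyS)
  · exact absurd hab (hS _ hyS _ hxS)
  · rfl

theorem IsIndep.card_inter_biUnion_edges_le {V ι : Type*} [DecidableEq V] {G : SimpleGraph V}
    {S : Finset V} (hS : IsIndep G S) (J : Finset ι) (a b : ι → V)
    (hab : ∀ j ∈ J, G.Adj (a j) (b j)) :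
    ((J.biUnion fun j => ({a j, b j} : Finset V)) ∩ S).card ≤ J.card := by
  rw [Finset.biUnion_inter]
  calc _ ≤ ∑ j ∈ J, (({a j, b j} : Finset V) ∩ S).card := Finset.card_biUnion_le
    _ ≤ ∑ _j ∈ J, 1 := Finset.sum_le_sum fun j hj => hS.card_inter_pair_le_one (hab j hj)
    _ = J.card := by rw [Finset.card_eq_sum_ones]

theorem segment_eq_biUnion (n k : ℕ) (t : ZMod n) :
    segment n k t = (Finset.range (2 * k)).biUnion fun j : ℕ => {u n (t + j), v n (t + j)} := by
  ext x
  simp only [segment, Finset.mem_union, Finset.mem_image, Finset.mem_biUnion,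
    Finset.mem_insert, Finset.mem_singleton]
  constructor
  · rintro (⟨j, hj, rfl⟩ | ⟨j, hj, rfl⟩)
    exacts [⟨j, hj, Or.inl rfl⟩, ⟨j, hj, Or.inr rfl⟩]
  · rintro ⟨j, hj, rfl | rfl⟩
    exacts [Or.inl ⟨j, hj, rfl⟩, Or.inr ⟨j, hj, rfl⟩]

theorem segment_inter_card_le_general (n k : ℕ)
    (S : Finset (ZMod n ⊕ ZMod n)) (hind : IsIndep (P n k) S) (t : ZMod n) :
    (segment n k t ∩ S).card ≤ 2 * k := by
  rw [segment_eq_biUnion]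
  simpa using hind.card_inter_biUnion_edges_le (Finset.range (2 * k)) _ _
    fun j _ => P_adj_u_v n k (t + j)

/-- For `n > 2k ≥ 2`, every independent set `S` of `P(n,k)` satisfies
`|I_t ∩ S| ≤ 2k` for every segment `I_t`. -/
theorem segment_inter_card_le (n k : ℕ) (hk : 1 ≤ k) (hn : 2 * k < n)
    (S : Finset (ZMod n ⊕ ZMod n)) (hind : IsIndep (P n k) S) (t : ZMod n) :
    (segment n k t ∩ S).card ≤ 2 * k :=
  segment_inter_card_le_general n k S hind t

end GP
end

section
/- For every integer n > 8: α(P(n,4)) = 7n/8 if n ≡ 0 (mod 8); α(P(n,4)) = 7(n−1)/8 if n ≡ 1 (mod 8); α(P(n,4)) = 7(n−2)/8 + 1 if n ≡ 2 (mod 8); α(P(n,4)) = 7(n−3)/8 + 2 if n ≡ 3 (mod 8); and α(P(n,4)) = 7(n−5)/8 + 4 if n ≡ 5 (mod 8). -/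
namespace GP

/-!
Write `a_i, b_i` for the indicators of `u_i, v_i ∈ S`. For the upper bound, a potential on the
window `(a_i; b_{i-3}, …, b_i)` drops by at least `8 (a_{i+1} + b_{i+1}) - 7` when the window moves
one column, whenever the edges inside the window are respected; summing around the cycle gives
`8 |S| ≤ 7 n`. For the lower bound, the columns `v u v u · v u v` repeated with period `8` carry
`7` vertices per block; a tail of length `L ≡ n (mod 8)` carrying `⌊7L/8⌋` vertices closes the
cycle. Every edge of `P(n,4)` joins columns at distance at most `4 < 8`, so the independence of
`q` blocks followed by the tail follows from the cases `q ≤ 2`, a finite check.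
In each of the five residue classes the claimed value is `⌊7n/8⌋`.
-/

open Finset

theorem indepNum_eq_of_forall_card_le {V : Type*} {G : SimpleGraph V} {m : ℕ}
    (hle : ∀ s, IsIndep G s → s.card ≤ m) (hex : ∃ s, IsIndep G s ∧ s.card = m) :
    indepNum G = m :=
  IsGreatest.csSup_eq ⟨hex, fun _ ⟨s, hs, hsm⟩ => hsm ▸ hle s hs⟩

theorem IsIndep.and_eq_false {V : Type*} [DecidableEq V] {G : SimpleGraph V} {s : Finset V}
    (hs : IsIndep G s) {x y : V} (h : G.Adj x y) : (decide (x ∈ s) && decide (y ∈ s)) = false := by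
  simpa using fun hx hy => hs x hx y hy h

section Adjacency

variable {n k : ℕ}

theorem adj_u_v (i : ZMod n) : (P n k).Adj (u n i) (v n i) :=
  ⟨Sum.inl_ne_inr, Or.inl rfl⟩

theorem adj_u_add_one (h1 : (1 : ZMod n) ≠ 0) (i : ZMod n) : (P n k).Adj (u n i) (u n (i + 1)) :=
  ⟨fun h => h1 (by simpa [u] using h), Or.inl rfl⟩

theorem adj_v_add (hk : (k : ZMod n) ≠ 0) (i : ZMod n) : (P n k).Adj (v n i) (v n (i + k)) :=
  ⟨fun h => hk (by simpa [v] using h), Or.inl rfl⟩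

end Adjacency

theorem sum_le_card_nsmul_of_potential {ι M : Type*} [Fintype ι] [AddCommMonoid M] [PartialOrder M]
    [IsOrderedCancelAddMonoid M] (σ : Equiv.Perm ι) (w φ : ι → M) (d : M)
    (h : ∀ i, w (σ i) + φ (σ i) ≤ d + φ i) : ∑ i, w i ≤ Fintype.card ι • d := by
  have hsum := Finset.sum_le_sum fun i (_ : i ∈ univ) => h i
  rwa [sum_add_distrib, sum_add_distrib, Equiv.sum_comp σ w, Equiv.sum_comp σ φ, sum_const,
    card_univ, add_le_add_iff_right] at hsum

theorem card_eq_sum_inl_add_inr {α : Type*} [Fintype α] [DecidableEq α] (s : Finset (α ⊕ α)) :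
    s.card = ∑ a, ((decide (Sum.inl a ∈ s)).toNat + (decide (Sum.inr a ∈ s)).toNat) := by
  rw [sum_add_distrib, ← Fintype.sum_sum_type (f := fun x => (decide (x ∈ s)).toNat)]
  simp only [Bool.toNat, Bool.cond_decide, sum_boole, Nat.cast_id, filter_mem_eq_inter, univ_inter]

/-- A feasible potential for the transfer digraph on windows `(a_i; b_{i-3}, …, b_i)`: `pot_step`
certifies that every closed walk of that digraph has mean weight at most `7/8`. -/
def pot : Bool → Bool → Bool → Bool → Bool → ℕ
  | false, false, false, false, false => 8
  | false, false, false, false, true  => 6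
  | false, false, false, true,  false => 8
  | false, false, false, true,  true  => 3
  | false, false, true,  false, false => 7
  | false, false, true,  false, true  => 4
  | false, false, true,  true,  false => 2
  | false, false, true,  true,  true  => 2
  | false, true,  false, false, false => 8
  | false, true,  false, false, true  => 6
  | false, true,  false, true,  false => 8
  | false, true,  false, true,  true  => 3
  | false, true,  true,  false, false => 2
  | false, true,  true,  false, true  => 1
  | false, true,  true,  true,  false => 2
  | false, true,  true,  true,  true  => 1
  | true,  false, false, false, false => 7
  | true,  false, false, true,  false => 5
  | true,  false, true,  false, false => 7
  | true,  false, true,  true,  false => 2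
  | true,  true,  false, false, false => 1
  | true,  true,  false, true,  false => 0
  | true,  true,  true,  false, false => 1
  | true,  true,  true,  true,  false => 0
  | _, _, _, _, _ => 0

theorem pot_step : ∀ a b₃ b₂ b₁ b₀ a' b' : Bool, (a && b₀) = false → (a' && b') = false →
    (a && a') = false → (b₃ && b') = false →
    8 * (a'.toNat + b'.toNat) + pot a' b₂ b₁ b₀ b' ≤ 7 + pot a b₃ b₂ b₁ b₀ := by
  decide

theorem eight_mul_card_le_of_isIndep {n : ℕ} (hn : 4 < n) {s : Finset (ZMod n ⊕ ZMod n)}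
    (hs : IsIndep (P n 4) s) : 8 * s.card ≤ 7 * n := by
  have : NeZero n := ⟨by omega⟩
  have h1 : (1 : ZMod n) ≠ 0 := by
    simpa using (ZMod.natCast_eq_zero_iff 1 n).not.mpr (Nat.not_dvd_of_pos_of_lt one_pos (by omega))
  have h4 : ((4 : ℕ) : ZMod n) ≠ 0 :=
    (ZMod.natCast_eq_zero_iff 4 n).not.mpr (Nat.not_dvd_of_pos_of_lt (by norm_num) hn)
  set a : ZMod n → Bool := fun i => decide (u n i ∈ s)
  set b : ZMod n → Bool := fun i => decide (v n i ∈ s)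
  have step (i : ZMod n) :
      8 * ((a (i + 1)).toNat + (b (i + 1)).toNat) +
        pot (a (i + 1)) (b (i + 1 - 3)) (b (i + 1 - 2)) (b (i + 1 - 1)) (b (i + 1)) ≤
      7 + pot (a i) (b (i - 3)) (b (i - 2)) (b (i - 1)) (b i) := by
    have hvv := hs.and_eq_false (adj_v_add h4 (i - 3))
    rw [show i - 3 + ((4 : ℕ) : ZMod n) = i + 1 by push_cast; ring] at hvv
    rw [show i + 1 - 3 = i - 2 by ring, show i + 1 - 2 = i - 1 by ring, add_sub_cancel_right]
    exact pot_step _ _ _ _ _ _ _ (hs.and_eq_false (adj_u_v i)) (hs.and_eq_false (adj_u_v (i + 1)))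
      (hs.and_eq_false (adj_u_add_one h1 i)) hvv
  have hsum := sum_le_card_nsmul_of_potential (Equiv.addRight 1)
    (fun i => 8 * ((a i).toNat + (b i).toNat))
    (fun i => pot (a i) (b (i - 3)) (b (i - 2)) (b (i - 1)) (b i)) 7 step
  rw [← mul_sum, ZMod.card, smul_eq_mul] at hsum
  rwa [card_eq_sum_inl_add_inr s, mul_comm 7]

/-- `U` and `V` mark the outer and inner vertices of a vertex set of `P(n,k)`, indices read
modulo `n`; admissibility is the independence of that set, column by column. -/
def IsAdmissible (n k : ℕ) (U V : ℕ → Bool) : Prop :=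
  ∀ j < n, ¬(U j ∧ V j) ∧ ¬(U j ∧ U ((j + 1) % n)) ∧ ¬(V j ∧ V ((j + k) % n))

instance (n k : ℕ) (U V : ℕ → Bool) : Decidable (IsAdmissible n k U V) :=
  inferInstanceAs (Decidable (∀ j < n, _))

def patternSet (n : ℕ) [NeZero n] (U V : ℕ → Bool) : Finset (ZMod n ⊕ ZMod n) :=
  ({i | U i.val} : Finset (ZMod n)).disjSum {i | V i.val}

section Pattern

variable {n : ℕ} [NeZero n]

theorem val_add_natCast (i : ZMod n) (c : ℕ) : (i + c).val = (i.val + c) % n := by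
  rw [ZMod.val_add, ZMod.val_natCast, Nat.add_mod_mod]

theorem isIndep_patternSet {k : ℕ} {U V : ℕ → Bool} (h : IsAdmissible n k U V) :
    IsIndep (P n k) (patternSet n U V) := by
  have hone : ∀ i : ZMod n, (i + 1).val = (i.val + 1) % n := by
    simpa using fun i => val_add_natCast (n := n) i 1
  have key : ∀ x ∈ patternSet n U V, ∀ y ∈ patternSet n U V, ¬ adjFun n k x y := by
    rintro (i | i) hx (j | j) hy hxy <;>
      simp only [patternSet, adjFun, inl_mem_disjSum, inr_mem_disjSum, mem_filter, mem_univ,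
        true_and] at hx hy hxy <;> subst hxy
    · exact (h i.val i.val_lt).2.1 ⟨hx, hone i ▸ hy⟩
    · exact (h j.val j.val_lt).1 ⟨hx, hy⟩
    · exact (h i.val i.val_lt).2.2 ⟨hx, val_add_natCast i k ▸ hy⟩
  rintro x hx y hy ⟨-, hxy | hyx⟩
  exacts [key x hx y hy hxy, key y hy x hx hyx]

theorem card_patternSet (U V : ℕ → Bool) :
    (patternSet n U V).card = n.count (U ·) + n.count (V ·) := by
  have key (W : ℕ → Bool) : ({i | W i.val} : Finset (ZMod n)).card = n.count (W ·) := by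
    rw [Nat.count_eq_card_filter_range]
    refine card_nbij' ZMod.val (fun j => (j : ZMod n)) ?_ ?_ ?_ ?_
    · intro i hi
      simpa using ⟨ZMod.val_lt i, by simpa using hi⟩
    · intro j hj
      simp only [coe_filter, mem_range] at hj
      simpa [ZMod.val_cast_of_lt hj.1] using hj.2
    · intro i _
      exact ZMod.natCast_zmod_val i
    · intro j hj
      simp only [coe_filter, mem_range] at hj
      exact ZMod.val_cast_of_lt hj.1
  rw [patternSet, card_disjSum, key, key]

end Pattern

def periodicWord (p q : ℕ) (b t : ℕ → Bool) (j : ℕ) : Bool :=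
  if j < p * q then b (j % p) else t (j - p * q)

section PeriodicWord

variable {p q L : ℕ}

theorem periodicWord_of_lt {b t : ℕ → Bool} {j : ℕ} (hj : j < p * q) :
    periodicWord p q b t j = b (j % p) :=
  if_pos hj

theorem periodicWord_succ_of_lt {b t : ℕ → Bool} {j : ℕ} (hj : j < p * q) :
    periodicWord p (q + 1) b t j = periodicWord p q b t j := by
  rw [periodicWord_of_lt hj, periodicWord_of_lt (by rw [mul_add_one]; omega)]

theorem periodicWord_succ_add (b t : ℕ → Bool) (j : ℕ) :
    periodicWord p (q + 1) b t (j + p) = periodicWord p q b t j := by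
  by_cases hj : j < p * q
  · simp [periodicWord, mul_add_one, hj]
  · simp [periodicWord, mul_add_one, hj, Nat.add_sub_add_right]

theorem periodicWord_succ_add_mod {b t : ℕ → Bool} {j d : ℕ} (hq : 0 < q) (hd : d ≤ p)
    (hj : j < p * q + L) :
    periodicWord p (q + 1) b t ((j + p + d) % (p * (q + 1) + L)) =
      periodicWord p q b t ((j + d) % (p * q + L)) := by
  have hpq : p ≤ p * q := Nat.le_mul_of_pos_right p hq
  rw [mul_add_one] at *
  by_cases hjd : j + d < p * q + L
  · rw [Nat.mod_eq_of_lt hjd, Nat.mod_eq_of_lt (by omega), add_right_comm, periodicWord_succ_add]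
  · rw [Nat.mod_eq_sub_mod (by omega), Nat.mod_eq_of_lt (by omega),
      Nat.mod_eq_sub_mod (by omega), Nat.mod_eq_of_lt (by omega),
      periodicWord_of_lt (by rw [mul_add_one]; omega), periodicWord_of_lt (by omega)]
    congr 2
    omega

/-- Every window `j, j + 1, j + k` spans at most two consecutive blocks, so adding a block creates
no new kind of window once there are two. -/
theorem IsAdmissible.periodicWord_succ {k : ℕ} {bU bV tU tV : ℕ → Bool} (hp : 0 < p)
    (hkp : k ≤ p) (hq : 2 ≤ q)
    (h : IsAdmissible (p * q + L) k (periodicWord p q bU tU) (periodicWord p q bV tV)) :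
    IsAdmissible (p * (q + 1) + L) k (periodicWord p (q + 1) bU tU)
      (periodicWord p (q + 1) bV tV) := by
  have h2p : p * 2 ≤ p * q := Nat.mul_le_mul_left p hq
  intro j hj
  rcases lt_or_ge j p with hjp | hjp
  · have hj1 : j + 1 < p * q := by omega
    have hjk : j + k < p * q := by omega
    have hmod : ∀ {x m}, x < p * q → p * q ≤ m → x % (m + L) = x := fun hx hm =>
      Nat.mod_eq_of_lt (by omega)
    have hwin := h j (by omega)
    rw [hmod hj1 le_rfl, hmod hjk le_rfl] at hwin
    rw [hmod hj1 (by rw [mul_add_one]; omega), hmod hjk (by rw [mul_add_one]; omega),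
      periodicWord_succ_of_lt hj1, periodicWord_succ_of_lt hjk,
      periodicWord_succ_of_lt (b := bU) (by omega), periodicWord_succ_of_lt (b := bV) (by omega)]
    exact hwin
  · obtain ⟨j, rfl⟩ : ∃ j', j = j' + p := ⟨j - p, by omega⟩
    have hj' : j < p * q + L := by rw [mul_add_one] at hj; omega
    rw [periodicWord_succ_add, periodicWord_succ_add, periodicWord_succ_add_mod (by omega) hp hj',
      periodicWord_succ_add_mod (by omega) hkp hj']
    exact h j hj'

theorem isAdmissible_periodicWord {k : ℕ} {bU bV tU tV : ℕ → Bool} (hp : 0 < p) (hkp : k ≤ p)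
    (h : ∀ q ≤ 2, IsAdmissible (p * q + L) k (periodicWord p q bU tU) (periodicWord p q bV tV))
    (q : ℕ) : IsAdmissible (p * q + L) k (periodicWord p q bU tU) (periodicWord p q bV tV) := by
  induction q with
  | zero => exact h 0 (by norm_num)
  | succ q ih =>
    rcases le_or_gt 2 q with hq | hq
    · exact ih.periodicWord_succ hp hkp hq
    · exact h (q + 1) (by omega)

theorem count_periodicWord (b t : ℕ → Bool) (q : ℕ) :
    (p * q + L).count (periodicWord p q b t ·) = q * p.count (b ·) + L.count (t ·) := by
  induction q with
  | zero => simp [periodicWord]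
  | succ q ih =>
    have hhead : p.count (periodicWord p (q + 1) b t ·) = p.count (b ·) := by
      simp only [Nat.count_eq_card_filter_range]
      refine congrArg card (filter_congr fun j hj => ?_)
      rw [mem_range] at hj
      rw [periodicWord_of_lt (by rw [mul_add_one]; omega), Nat.mod_eq_of_lt hj]
    rw [show p * (q + 1) + L = p + (p * q + L) by ring, Nat.count_add, hhead]
    simp only [add_comm p, periodicWord_succ_add, ih]
    ring

end PeriodicWord

-- The block `v u v u · v u v`.
def outerBlock : ℕ → Bool := (· ∈ [1, 3, 6])

def innerBlock : ℕ → Bool := (· ∈ [0, 2, 5, 7])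

theorem alpha_four_eq_of_tail {n L : ℕ} (tU tV : ℕ → Bool)
    (hadm : ∀ q ≤ 2, IsAdmissible (8 * q + L) 4
      (periodicWord 8 q outerBlock tU) (periodicWord 8 q innerBlock tV))
    (hcount : L.count (tU ·) + L.count (tV ·) = 7 * L / 8)
    (hn : 4 < n) (hLn : L ≤ n) (hmod : n % 8 = L % 8) :
    alpha n 4 = 7 * n / 8 := by
  obtain ⟨q, rfl⟩ : ∃ q, n = 8 * q + L := ⟨(n - L) / 8, by omega⟩
  have : NeZero (8 * q + L) := ⟨by omega⟩
  refine indepNum_eq_of_forall_card_le (fun s hs => ?_)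
    ⟨patternSet _ (periodicWord 8 q outerBlock tU) (periodicWord 8 q innerBlock tV),
      isIndep_patternSet (isAdmissible_periodicWord (by norm_num) (by norm_num) hadm q), ?_⟩
  · have := eight_mul_card_le_of_isIndep hn hs
    omega
  · rw [card_patternSet, count_periodicWord, count_periodicWord,
      show Nat.count (outerBlock ·) 8 = 3 by decide, show Nat.count (innerBlock ·) 8 = 4 by decide]
    omega

/-- Exact values of `α(P(n,4))` for `n > 8` in the residue classes
`0, 1, 2, 3, 5` modulo `8`. -/
theorem alpha_Pn4_exact (n : ℕ) (hn : 8 < n) :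
    (n % 8 = 0 → alpha n 4 = 7 * n / 8) ∧
    (n % 8 = 1 → alpha n 4 = 7 * (n - 1) / 8) ∧
    (n % 8 = 2 → alpha n 4 = 7 * (n - 2) / 8 + 1) ∧
    (n % 8 = 3 → alpha n 4 = 7 * (n - 3) / 8 + 2) ∧
    (n % 8 = 5 → alpha n 4 = 7 * (n - 5) / 8 + 4) := by
  refine ⟨fun hr => ?_, fun hr => ?_, fun hr => ?_, fun hr => ?_, fun hr => ?_⟩
  · exact alpha_four_eq_of_tail (L := 0) (fun _ => false) (fun _ => false) (by decide) (by decide)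
      (by omega) (by omega) (by omega)
  · rw [alpha_four_eq_of_tail (L := 9) (· ∈ [1, 3, 5, 7]) (· ∈ [0, 6, 8]) (by decide) (by decide)
      (by omega) (by omega) (by omega)]
    omega
  · rw [alpha_four_eq_of_tail (L := 2) (· ∈ [1]) (fun _ => false) (by decide) (by decide)
      (by omega) (by omega) (by omega)]
    omega
  · rw [alpha_four_eq_of_tail (L := 11) (· ∈ [1, 4, 7, 9]) (· ∈ [0, 2, 5, 8, 10]) (by decide)
      (by decide) (by omega) (by omega) (by omega)]
    omega
  · rw [alpha_four_eq_of_tail (L := 5) (· ∈ [1, 3]) (· ∈ [2, 4]) (by decide) (by decide)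
      (by omega) (by omega) (by omega)]
    omega

end GP
end
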